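/- arXiv:1904.08120 — 4 statements merged into one kernel-verified Lean document; each statement's English description precedes it below -/
import Mathlib

section
/- Let g : ℝ → ℝ be differentiable and suppose m : ℝ → ℝ is differentiable such that the function (v,r) ↦ m(v) satisfies v·m'(v) − m(v)·(3g(v)r + 1) + g(v)r² + g'(v)r³ = 0 for all v and all r > 0. Then g ≡ 0 and m(v) = λ·v for some constant λ. -/
/-! Evaluating the equation at four values of `r` shows that its coefficients of `1, r, r², r³`
vanish separately: the `r²`-coefficient gives `g = 0` and the constant one the Euler equation
`v m' = m`. On each open half-line `m v / v` then has zero derivative, so `m` is linear there, and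
differentiability at `0` forces both slopes to equal `m' 0`. -/

open Set

theorem cubic_coeffs_eq_zero_of_forall_pos {K : Type*} [Field K] [LinearOrder K]
    [IsStrictOrderedRing K] {a b c d : K}
    (h : ∀ r : K, 0 < r → a + b * r + c * r ^ 2 + d * r ^ 3 = 0) :
    a = 0 ∧ b = 0 ∧ c = 0 ∧ d = 0 := by
  have h1 := h 1 one_pos
  have h2 := h 2 two_pos
  have h3 := h 3 three_pos
  have h4 := h 4 four_pos
  norm_num at h1 h2 h3 h4
  refine ⟨?_, ?_, ?_, ?_⟩ <;> linarith

theorem eqOn_Ioi_mul_of_mul_deriv_eq {m : ℝ → ℝ}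
    (hm : DifferentiableOn ℝ m (Ioi 0)) (h : ∀ v ∈ Ioi (0 : ℝ), v * deriv m v = m v) :
    EqOn m (fun v ↦ m 1 * v) (Ioi 0) := by
  have hquot : ∀ v ∈ Ioi (0 : ℝ), HasDerivAt (fun v ↦ m v / v) 0 v := by
    intro v hv
    refine ((hm.differentiableAt (Ioi_mem_nhds hv)).hasDerivAt.div (hasDerivAt_id' v)
      hv.ne').congr_deriv ?_
    rw [mul_one, mul_comm, h v hv, sub_self, zero_div]
  intro v hv
  have hconst := isOpen_Ioi.is_const_of_deriv_eq_zero isConnected_Ioi.isPreconnected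
    (fun x hx ↦ (hquot x hx).differentiableAt.differentiableWithinAt)
    (fun x hx ↦ (hquot x hx).deriv) hv (mem_Ioi.2 one_pos)
  have hv0 : v ≠ 0 := ne_of_gt hv
  field_simp at hconst
  simpa [mul_comm] using hconst

theorem eq_of_hasDerivAt_zero_of_eqOn_mul_Ioi {f : ℝ → ℝ} {c d : ℝ} (hd : HasDerivAt f d 0)
    (hf0 : f 0 = 0) (hf : EqOn f (fun v ↦ c * v) (Ioi 0)) : c = d := by
  have hlin : HasDerivWithinAt f c (Ioi 0) 0 :=
    ((hasDerivAt_id' 0).const_mul c).hasDerivWithinAt.congr hf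
      (by simp [hf0]) |>.congr_deriv (mul_one c)
  exact (uniqueDiffWithinAt_Ioi 0).eq_deriv _ hlin hd.hasDerivWithinAt

theorem exists_eq_mul_of_mul_deriv_eq {m : ℝ → ℝ} (hm : Differentiable ℝ m)
    (h : ∀ v, v * deriv m v = m v) : ∃ c, ∀ v, m v = c * v := by
  have hm0 : m 0 = 0 := by simpa using (h 0).symm
  have hneg_diff : Differentiable ℝ fun v ↦ m (-v) := hm.comp differentiable_neg
  have hneg_ode : ∀ v, v * deriv (fun v ↦ m (-v)) v = m (-v) := fun v ↦ by
    rw [deriv_comp_neg, ← h (-v)]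
    ring
  have hpos := eqOn_Ioi_mul_of_mul_deriv_eq hm.differentiableOn fun v _ ↦ h v
  have hneg := eqOn_Ioi_mul_of_mul_deriv_eq hneg_diff.differentiableOn
    fun v _ ↦ hneg_ode v
  have hslope_pos : m 1 = deriv m 0 :=
    eq_of_hasDerivAt_zero_of_eqOn_mul_Ioi hm.differentiableAt.hasDerivAt hm0 hpos
  have hslope_neg : m (-1) = -deriv m 0 := by
    rw [eq_of_hasDerivAt_zero_of_eqOn_mul_Ioi hneg_diff.differentiableAt.hasDerivAt
      (by simpa using hm0) hneg, deriv_comp_neg, neg_zero]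
  refine ⟨deriv m 0, fun v ↦ ?_⟩
  rcases lt_trichotomy v 0 with hv | rfl | hv
  · have hv' : m (-(-v)) = m (-1) * -v := hneg (neg_pos.2 hv)
    rw [neg_neg] at hv'
    rw [hv', hslope_neg]
    ring
  · rw [hm0, mul_zero]
  · rw [hpos hv, hslope_pos]

theorem stmt_7_general (g m : ℝ → ℝ) (hm : Differentiable ℝ m)
    (h : ∀ v r : ℝ, 0 < r →
      v * deriv m v - m v * (3 * g v * r + 1) + g v * r ^ 2
        + deriv g v * r ^ 3 = 0) :
    (∀ v : ℝ, g v = 0) ∧ ∃ lam : ℝ, ∀ v : ℝ, m v = lam * v := by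
  have hcoeffs : ∀ v, v * deriv m v - m v = 0 ∧ -3 * g v * m v = 0 ∧ g v = 0 ∧ deriv g v = 0 :=
    fun v ↦ cubic_coeffs_eq_zero_of_forall_pos fun r hr ↦ by linear_combination h v r hr
  refine ⟨fun v ↦ (hcoeffs v).2.2.1, exists_eq_mul_of_mul_deriv_eq hm fun v ↦ ?_⟩
  linarith [(hcoeffs v).1]

/-- If `m = m(v)` satisfies the master conformal Killing equation
`v·m' − m·(3g r + 1) + g r² + g' r³ = 0` for all `v` and `r > 0`, then `g ≡ 0`
and `m(v) = λ·v`. -/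
theorem stmt_7 (g m : ℝ → ℝ) (hg : Differentiable ℝ g) (hm : Differentiable ℝ m)
    (h : ∀ v r : ℝ, 0 < r →
      v * deriv m v - m v * (3 * g v * r + 1) + g v * r ^ 2
        + deriv g v * r ^ 3 = 0) :
    (∀ v : ℝ, g v = 0) ∧ ∃ lam : ℝ, ∀ v : ℝ, m v = lam * v :=
  stmt_7_general g m hm h
end

section
/- Let K ∈ ℝ and let G : ℝ → ℝ be differentiable. Define m(v,r) = G((v/r)·(Kr + 1))·(K²r³ + 2Kr² + r) + r/2 for r > 0. Then m satisfies v·∂m/∂v + (Kr² + r)·∂m/∂r − m·(3Kr + 1) + Kr² = 0 for all v and all r > 0. -/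
/-! The argument `u = (v / r)(Kr + 1)` of `G` is a first integral of the conformal Killing vector
`X = v ∂_v + (Kr² + r) ∂_r`, since `∂_v u = (Kr + 1) / r` and `∂_r u = -v / r²`. Hence `X` acts on
`G(u) · r(Kr + 1)²` only through the factor `r(Kr + 1)²`, whose `X`-derivative is `(3Kr + 1)` times
itself; the remaining term `r / 2` balances `Kr²` directly. -/

lemma hasDerivAt_div_mul_mul_add_one (K v : ℝ) {r : ℝ} (hr : r ≠ 0) :
    HasDerivAt (fun s : ℝ => v / s * (K * s + 1)) (-v / r ^ 2) r := by
  refine (((hasDerivAt_const r v).div (hasDerivAt_id' r) hr).mul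
    (((hasDerivAt_id' r).const_mul K).add_const 1)).congr_deriv ?_
  simp only [Pi.div_apply]
  field_simp
  ring

/-- The polynomial is `s (K s + 1)²`, expanded as in the mass function. -/
lemma hasDerivAt_mul_mul_add_one_sq (K r : ℝ) :
    HasDerivAt (fun s : ℝ => K ^ 2 * s ^ 3 + 2 * K * s ^ 2 + s)
      ((K * r + 1) * (3 * K * r + 1)) r := by
  refine ((((hasDerivAt_pow 3 r).const_mul (K ^ 2)).add
    ((hasDerivAt_pow 2 r).const_mul (2 * K))).add (hasDerivAt_id' r)).congr_deriv ?_
  push_cast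
  ring

/-- For `K ∈ ℝ` and differentiable `G`, the mass function
`m(v,r) = G((v/r)(Kr+1))·(K²r³ + 2Kr² + r) + r/2` satisfies
`v·m_,v + (Kr² + r)·m_,r − m·(3Kr + 1) + Kr² = 0` for `r > 0`. -/
theorem stmt_8 (K : ℝ) (G : ℝ → ℝ) (hG : Differentiable ℝ G) (v r : ℝ) (hr : 0 < r) :
    v * deriv (fun w : ℝ =>
        G ((w / r) * (K * r + 1)) * (K ^ 2 * r ^ 3 + 2 * K * r ^ 2 + r) + r / 2) v
      + (K * r ^ 2 + r) * deriv (fun s : ℝ =>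
        G ((v / s) * (K * s + 1)) * (K ^ 2 * s ^ 3 + 2 * K * s ^ 2 + s) + s / 2) r
      - (G ((v / r) * (K * r + 1)) * (K ^ 2 * r ^ 3 + 2 * K * r ^ 2 + r) + r / 2)
          * (3 * K * r + 1)
      + K * r ^ 2 = 0 := by
  have hr₀ : r ≠ 0 := hr.ne'
  set u := v / r * (K * r + 1)
  set F := K ^ 2 * r ^ 3 + 2 * K * r ^ 2 + r
  have hderiv_v : HasDerivAt (fun w : ℝ => G (w / r * (K * r + 1)) * F + r / 2)
      (deriv G u * ((K * r + 1) / r) * F) v := by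
    have hu : HasDerivAt (fun w : ℝ => w / r * (K * r + 1)) ((K * r + 1) / r) v := by
      refine (((hasDerivAt_id' v).div_const r).mul_const (K * r + 1)).congr_deriv ?_
      ring
    exact (((hG u).hasDerivAt.comp v hu).mul_const F).add_const _
  have hderiv_r : HasDerivAt
      (fun s : ℝ => G (v / s * (K * s + 1)) * (K ^ 2 * s ^ 3 + 2 * K * s ^ 2 + s) + s / 2)
      (deriv G u * (-v / r ^ 2) * F + G u * ((K * r + 1) * (3 * K * r + 1)) + 1 / 2) r :=
    (((hG u).hasDerivAt.comp r (hasDerivAt_div_mul_mul_add_one K v hr₀)).mul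
      (hasDerivAt_mul_mul_add_one_sq K r)).add ((hasDerivAt_id r).div_const 2)
  have hfirst_integral : v * ((K * r + 1) / r) + (K * r ^ 2 + r) * (-v / r ^ 2) = 0 := by
    field_simp
    ring
  rw [hderiv_v.deriv, hderiv_r.deriv]
  linear_combination (deriv G u * F) * hfirst_integral
end

section
/- Let m : ℝ × (0,∞) → ℝ be C¹, and let 𝔤 be the generalised Vaidya metric as above. The vector field X = v∂_v + r∂_r satisfies (L_X 𝔤)_{μν} = 2·𝔤_{μν} (i.e., X is homothetic) if and only if m_{,r} + (v/r)·m_{,v} − m/r = 0 for all v and r > 0. -/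
open Matrix

/-- Partial derivative in the α-th coordinate direction on ℝ⁴. -/
noncomputable def pd4 (f : (Fin 4 → ℝ) → ℝ) (α : Fin 4) (p : Fin 4 → ℝ) : ℝ :=
  deriv (fun t => f (Function.update p α t)) (p α)

/-- Lie derivative of a metric `G` along a vector field `X`:
`(L_X G)_{μν} = X^α ∂_α G_{μν} + G_{αν} ∂_μ X^α + G_{μα} ∂_ν X^α`. -/
noncomputable def lieDeriv (X : (Fin 4 → ℝ) → Fin 4 → ℝ)
    (G : (Fin 4 → ℝ) → Matrix (Fin 4) (Fin 4) ℝ) (μ ν : Fin 4) (p : Fin 4 → ℝ) : ℝ :=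
  (∑ α, X p α * pd4 (fun q => G q μ ν) α p)
    + (∑ α, G p α ν * pd4 (fun q => X q α) μ p)
    + (∑ α, G p μ α * pd4 (fun q => X q α) ν p)

/-- The generalised Vaidya metric as a matrix field on ℝ⁴ with coordinates
`p = (v, r, θ, φ)`. -/
noncomputable def vaidyaG (m : ℝ → ℝ → ℝ) (p : Fin 4 → ℝ) : Matrix (Fin 4) (Fin 4) ℝ :=
  !![-(1 - 2 * m (p 0) (p 1) / p 1), -1, 0, 0;
     -1, 0, 0, 0;
     0, 0, (p 1) ^ 2, 0;
     0, 0, 0, (p 1) ^ 2 * Real.sin (p 2) ^ 2]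

/-- The homothetic Killing candidate `X = v ∂_v + r ∂_r`. -/
def homVec (p : Fin 4 → ℝ) : Fin 4 → ℝ := ![p 0, p 1, 0, 0]

/-! `X = v ∂_v + r ∂_r` has components `X^α = c_α x^α` with `c = (1, 1, 0, 0)`, so
`∂_μ X^α = c_α δ^α_μ` and `(L_X 𝔤)_{μν} = v ∂_v 𝔤_{μν} + r ∂_r 𝔤_{μν} + (c_μ + c_ν) 𝔤_{μν}`.
Every component other than `𝔤₀₀` is constant or `r²` times a function of `θ`, and satisfies
the homothety equation identically. For `𝔤₀₀ = -1 + 2m/r` one finds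
`(L_X 𝔤)₀₀ - 2𝔤₀₀ = 2 (m_{,r} + (v/r) m_{,v} - m/r)`. -/

lemma pd4_const_mul_apply (c : ℝ) (α μ : Fin 4) (p : Fin 4 → ℝ) :
    pd4 (fun q => c * q α) μ p = if μ = α then c else 0 := by
  unfold pd4
  split_ifs with h
  · subst h
    simp
  · simp [Function.update_of_ne (Ne.symm h)]

lemma lieDeriv_diagonal_linear (c : Fin 4 → ℝ) (G : (Fin 4 → ℝ) → Matrix (Fin 4) (Fin 4) ℝ)
    (μ ν : Fin 4) (p : Fin 4 → ℝ) :
    lieDeriv (fun q α => c α * q α) G μ ν p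
      = ∑ α, c α * p α * pd4 (fun q => G q μ ν) α p + (c μ + c ν) * G p μ ν := by
  simp only [lieDeriv, pd4_const_mul_apply, mul_ite, mul_zero, Finset.sum_ite_eq,
    Finset.mem_univ, if_true]
  ring

lemma homVec_eq : homVec = fun q α => ![1, 1, 0, 0] α * q α := by
  funext q α
  fin_cases α <;> simp [homVec]

lemma lieDeriv_homVec (G : (Fin 4 → ℝ) → Matrix (Fin 4) (Fin 4) ℝ) (μ ν : Fin 4)
    (p : Fin 4 → ℝ) :
    lieDeriv homVec G μ ν p
      = p 0 * pd4 (fun q => G q μ ν) 0 p + p 1 * pd4 (fun q => G q μ ν) 1 p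
        + (![1, 1, 0, 0] μ + ![1, 1, 0, 0] ν) * G p μ ν := by
  simp [homVec_eq, lieDeriv_diagonal_linear, Fin.sum_univ_four]

lemma lieDeriv_homVec_vaidyaG_of_ne (m : ℝ → ℝ → ℝ) (p : Fin 4 → ℝ) {μ ν : Fin 4}
    (hμν : ¬(μ = 0 ∧ ν = 0)) :
    lieDeriv homVec (vaidyaG m) μ ν p = 2 * vaidyaG m p μ ν := by
  rw [lieDeriv_homVec]
  fin_cases μ <;> fin_cases ν <;> simp_all [pd4, vaidyaG] <;> ring

-- No differentiability in `v` is needed: `deriv` commutes with constant factors regardless.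
lemma pd4_vaidyaG_zero_zero_zero (m : ℝ → ℝ → ℝ) (p : Fin 4 → ℝ) :
    pd4 (fun q => vaidyaG m q 0 0) 0 p = 2 * deriv (fun w => m w (p 1)) (p 0) / p 1 := by
  simp [pd4, vaidyaG]

lemma pd4_vaidyaG_zero_zero_one (m : ℝ → ℝ → ℝ) (p : Fin 4 → ℝ) (hr : p 1 ≠ 0)
    (hdiff : DifferentiableAt ℝ (fun s => m (p 0) s) (p 1)) :
    pd4 (fun q => vaidyaG m q 0 0) 1 p
      = 2 * (deriv (fun s => m (p 0) s) (p 1) * p 1 - m (p 0) (p 1)) / p 1 ^ 2 := by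
  have h : HasDerivAt (fun t => -(1 - 2 * m (p 0) t / t))
      (-(-((2 * deriv (fun s => m (p 0) s) (p 1) * p 1 - 2 * m (p 0) (p 1) * 1) / p 1 ^ 2)))
      (p 1) :=
    (((hdiff.hasDerivAt.const_mul 2).div (hasDerivAt_id' (p 1)) hr).const_sub 1).neg
  change deriv (fun t => -(1 - 2 * m (p 0) t / t)) (p 1) = _
  rw [h.deriv]
  ring

lemma lieDeriv_homVec_vaidyaG_zero_zero (m : ℝ → ℝ → ℝ) (p : Fin 4 → ℝ) (hp : 0 < p 1)
    (hr : DifferentiableAt ℝ (fun s => m (p 0) s) (p 1)) :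
    lieDeriv homVec (vaidyaG m) 0 0 p = 2 * vaidyaG m p 0 0
      + 2 * (deriv (fun s => m (p 0) s) (p 1)
          + (p 0 / p 1) * deriv (fun w => m w (p 1)) (p 0) - m (p 0) (p 1) / p 1) := by
  rw [lieDeriv_homVec, pd4_vaidyaG_zero_zero_zero,
    pd4_vaidyaG_zero_zero_one m p hp.ne' hr]
  simp only [vaidyaG, of_apply, cons_val_zero, cons_val', cons_val_fin_one]
  field_simp
  ring

lemma differentiableAt_right_of_contDiffOn {m : ℝ → ℝ → ℝ}
    (hm : ContDiffOn ℝ 1 (fun p : ℝ × ℝ => m p.1 p.2) {p : ℝ × ℝ | 0 < p.2})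
    {v r : ℝ} (hr : 0 < r) : DifferentiableAt ℝ (fun s => m v s) r := by
  have hopen : IsOpen {p : ℝ × ℝ | 0 < p.2} := isOpen_lt continuous_const continuous_snd
  have hvr : DifferentiableAt ℝ (fun p : ℝ × ℝ => m p.1 p.2) (v, r) :=
    (hm.differentiableOn one_ne_zero).differentiableAt (hopen.mem_nhds hr)
  exact hvr.comp r ((differentiableAt_const v).prodMk differentiableAt_id)

/-- `X = v∂_v + r∂_r` is homothetic (`L_X 𝔤 = 2𝔤`) for the
generalised Vaidya metric iff `m_,r + (v/r) m_,v − m/r = 0` for all `v`, `r > 0`. -/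
theorem stmt_15 (m : ℝ → ℝ → ℝ)
    (hm : ContDiffOn ℝ 1 (fun p : ℝ × ℝ => m p.1 p.2) {p : ℝ × ℝ | 0 < p.2}) :
    (∀ p : Fin 4 → ℝ, 0 < p 1 → ∀ μ ν : Fin 4,
        lieDeriv homVec (vaidyaG m) μ ν p = 2 * vaidyaG m p μ ν)
      ↔ (∀ v r : ℝ, 0 < r →
          deriv (fun s => m v s) r + (v / r) * deriv (fun w => m w r) v
            - m v r / r = 0) := by
  constructor
  · intro hX v r hr
    have h00 := lieDeriv_homVec_vaidyaG_zero_zero m ![v, r, 0, 0] hr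
      (differentiableAt_right_of_contDiffOn hm hr)
    rw [hX _ hr] at h00
    simpa using h00
  · intro hpde p hp μ ν
    by_cases hμν : μ = 0 ∧ ν = 0
    · obtain ⟨rfl, rfl⟩ := hμν
      rw [lieDeriv_homVec_vaidyaG_zero_zero m p hp (differentiableAt_right_of_contDiffOn hm hp),
        hpde _ _ hp, mul_zero, add_zero]
    · exact lieDeriv_homVec_vaidyaG_of_ne m p hμν
end

section
/- Let n be a positive integer and H : ℝ → ℝ differentiable. Define for v, r > 0: m(v,r) = −(r²/((n+1)³v³))·(−v·r·H(Φ) + (1/2)v^{2n+3}·r·(n+1) + v^{n+2}(n+1)²(n·r + v)), where Φ = v(v^n·r + n + 1)/(r(n+1)). Then m satisfies v·m_{,v} + (v^n·r² + r)·m_{,r} − m·(3v^n·r + 1) + v^n·r² + n·v^{n−1}·r³ = 0 for all v, r > 0. -/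
/-- for a positive integer `n` and differentiable `H`, the mass
function
`m(v,r) = −(r²/((n+1)³v³))·(−v r H(Φ) + ½ v^{2n+3} r (n+1) + v^{n+2}(n+1)²(n r + v))`
with `Φ = v(vⁿ r + n + 1)/(r(n+1))` satisfies the master conformal Killing
equation with `g(v) = vⁿ`:
`v m_,v + (vⁿ r² + r) m_,r − m(3 vⁿ r + 1) + vⁿ r² + n v^{n−1} r³ = 0`
for all `v, r > 0`. -/
theorem stmt_17 (n : ℕ) (hn : 0 < n) (H : ℝ → ℝ) (hH : Differentiable ℝ H)
    (v r : ℝ) (hv : 0 < v) (hr : 0 < r) :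
    let Φ : ℝ → ℝ → ℝ := fun w s => w * (w ^ n * s + (n : ℝ) + 1) / (s * ((n : ℝ) + 1))
    let m : ℝ → ℝ → ℝ := fun w s =>
      -(s ^ 2 / (((n : ℝ) + 1) ^ 3 * w ^ 3)) *
        (-(w * s * H (Φ w s)) + (1 / 2) * w ^ (2 * n + 3) * s * ((n : ℝ) + 1)
          + w ^ (n + 2) * ((n : ℝ) + 1) ^ 2 * ((n : ℝ) * s + w))
    v * deriv (fun w => m w r) v + (v ^ n * r ^ 2 + r) * deriv (fun s => m v s) r
      - m v r * (3 * v ^ n * r + 1) + v ^ n * r ^ 2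
      + (n : ℝ) * v ^ (n - 1) * r ^ 3 = 0 := by
  obtain ⟨k, rfl⟩ : ∃ k, n = k + 1 := ⟨n - 1, (Nat.succ_pred_eq_of_pos hn).symm⟩
  intro Φ m
  have hvne : v ≠ 0 := ne_of_gt hv
  have hrne : r ≠ 0 := ne_of_gt hr
  have hC : (((k+1:ℕ)):ℝ) + 1 ≠ 0 := by positivity
  have hden1 : ((((k+1:ℕ)):ℝ) + 1) ^ 3 * v ^ 3 ≠ 0 := by positivity
  have hden2 : r * ((((k+1:ℕ)):ℝ) + 1) ≠ 0 := by positivity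
  have hH' : HasDerivAt H (deriv H (Φ v r)) (Φ v r) := (hH _).hasDerivAt
  -- v-direction
  have hΦv : HasDerivAt (fun w => Φ w r) _ v :=
    ((hasDerivAt_id v).mul
      ((((hasDerivAt_pow (k+1) v).mul_const r).add_const (((k+1:ℕ)):ℝ)).add_const 1)).div_const
      (r * ((((k+1:ℕ)):ℝ) + 1))
  have hHv : HasDerivAt (fun w => H (Φ w r)) _ v := hH'.comp v hΦv
  have ht1 : HasDerivAt (fun w => w * r * H (Φ w r)) _ v :=
    ((hasDerivAt_id v).mul_const r).mul hHv
  have ht2 : HasDerivAt (fun w : ℝ => 1/2 * w ^ (2*(k+1)+3) * r * ((((k+1:ℕ)):ℝ) + 1)) _ v :=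
    (((hasDerivAt_pow (2*(k+1)+3) v).const_mul (1/2)).mul_const r).mul_const _
  have ht3 : HasDerivAt
      (fun w : ℝ => w ^ (k+1+2) * ((((k+1:ℕ)):ℝ) + 1) ^ 2 * ((((k+1:ℕ)):ℝ) * r + w)) _ v :=
    ((hasDerivAt_pow (k+1+2) v).mul_const (((((k+1:ℕ)):ℝ) + 1) ^ 2)).mul
      ((hasDerivAt_const v ((((k+1:ℕ)):ℝ) * r)).add (hasDerivAt_id v))
  have hpre : HasDerivAt (fun w : ℝ => -(r ^ 2 / (((((k+1:ℕ)):ℝ) + 1) ^ 3 * w ^ 3))) _ v :=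
    ((hasDerivAt_const v (r ^ 2)).div
      ((hasDerivAt_pow 3 v).const_mul (((((k+1:ℕ)):ℝ) + 1) ^ 3)) hden1).neg
  have hd1 : HasDerivAt (fun w => m w r) _ v := hpre.mul ((ht1.neg.add ht2).add ht3)
  -- r-direction
  have hΦr : HasDerivAt (fun s => Φ v s) _ r :=
    (((((hasDerivAt_id r).const_mul (v ^ (k+1))).add_const (((k+1:ℕ)):ℝ)).add_const 1).const_mul
      v).div ((hasDerivAt_id r).mul_const ((((k+1:ℕ)):ℝ) + 1)) hden2
  have hHr : HasDerivAt (fun s => H (Φ v s)) _ r := hH'.comp r hΦr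
  have hs1 : HasDerivAt (fun s => v * s * H (Φ v s)) _ r :=
    ((hasDerivAt_id r).const_mul v).mul hHr
  have hs2 : HasDerivAt (fun s : ℝ => 1/2 * v ^ (2*(k+1)+3) * s * ((((k+1:ℕ)):ℝ) + 1)) _ r :=
    (((hasDerivAt_id r).const_mul (1/2 * v ^ (2*(k+1)+3))).mul_const _)
  have hs3 : HasDerivAt
      (fun s : ℝ => v ^ (k+1+2) * ((((k+1:ℕ)):ℝ) + 1) ^ 2 * ((((k+1:ℕ)):ℝ) * s + v)) _ r :=
    (((hasDerivAt_id r).const_mul (((k+1:ℕ)):ℝ)).add_const v).const_mul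
      (v ^ (k+1+2) * ((((k+1:ℕ)):ℝ) + 1) ^ 2)
  have hpre2 : HasDerivAt (fun s : ℝ => -(s ^ 2 / (((((k+1:ℕ)):ℝ) + 1) ^ 3 * v ^ 3))) _ r :=
    ((hasDerivAt_pow 2 r).div_const (((((k+1:ℕ)):ℝ) + 1) ^ 3 * v ^ 3)).neg
  have hd2 : HasDerivAt (fun s => m v s) _ r := hpre2.mul ((hs1.neg.add hs2).add hs3)
  rw [hd1.deriv, hd2.deriv]
  have e1 : k + 1 - 1 = k := by omega
  have e2 : 2*(k+1) + 3 - 1 = 2*k + 4 := by omega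
  have e3 : k + 1 + 2 - 1 = k + 2 := by omega
  simp only [m, Φ, Function.comp_apply, e1, e2, e3, id_eq,
    show (3:ℕ)-1 = 2 from rfl, show (2:ℕ)-1 = 1 from rfl]
  push_cast
  field_simp
  ring
end
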